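/- arXiv:1111.6312 — 2 statements merged into one kernel-verified Lean document; each statement's English description precedes it below -/
import Mathlib

section
/- Let $y > 0$ and $k \ge 0$ an integer. Then $\int_0^y z^k e^{-z/2}\,dz \ge 2^{k+1} k! \left(1 - (1 + y/2)^k e^{-y/2}\right)$. -/
open MeasureTheory Real

/-!
Integrating by parts gives `I (k+1) = -2 y^(k+1) e^(-y/2) + 2 (k+1) I k` for
`I k = ∫₀^y z^k e^(-z/2) dz`, so the bound follows by induction on `k`: the bound is
preserved by this recursion as soon as `y^k ≤ (k+1)! (2 + y)^k`.
-/

lemma hasDerivAt_neg_two_mul_exp_neg_half (x : ℝ) :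
    HasDerivAt (fun z : ℝ => -2 * exp (-z / 2)) (exp (-x / 2)) x :=
  (((hasDerivAt_neg' x).div_const 2).exp.const_mul (-2)).congr_deriv (by ring)

lemma integral_exp_neg_half (a b : ℝ) :
    ∫ z in a..b, exp (-z / 2) = 2 * exp (-a / 2) - 2 * exp (-b / 2) := by
  rw [intervalIntegral.integral_eq_sub_of_hasDerivAt
    (fun x _ => hasDerivAt_neg_two_mul_exp_neg_half x)
    ((by fun_prop : Continuous _).intervalIntegrable _ _)]
  ring

lemma integral_pow_succ_mul_exp_neg_half (k : ℕ) (a b : ℝ) :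
    ∫ z in a..b, z ^ (k + 1) * exp (-z / 2) =
      2 * a ^ (k + 1) * exp (-a / 2) - 2 * b ^ (k + 1) * exp (-b / 2) +
        2 * (k + 1) * ∫ z in a..b, z ^ k * exp (-z / 2) := by
  have hpow (x : ℝ) : HasDerivAt (fun z : ℝ => z ^ (k + 1)) ((k + 1) * x ^ k) x := by
    simpa using hasDerivAt_pow (k + 1) x
  rw [intervalIntegral.integral_mul_deriv_eq_deriv_mul (fun x _ => hpow x)
    (fun x _ => hasDerivAt_neg_two_mul_exp_neg_half x)
    ((by fun_prop : Continuous _).intervalIntegrable _ _)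
    ((by fun_prop : Continuous _).intervalIntegrable _ _)]
  have hparts : ∫ x in a..b, ((k : ℝ) + 1) * x ^ k * (-2 * exp (-x / 2)) =
      -2 * (k + 1) * ∫ x in a..b, x ^ k * exp (-x / 2) := by
    rw [← intervalIntegral.integral_const_mul]
    congr 1 with x
    ring
  rw [hparts]
  ring

lemma pow_le_factorial_succ_mul_add_two_pow {y : ℝ} (hy : 0 ≤ y) (k : ℕ) :
    y ^ k ≤ (k + 1).factorial * (2 + y) ^ k :=
  calc y ^ k ≤ (2 + y) ^ k := pow_le_pow_left₀ hy (by linarith) k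
    _ ≤ (k + 1).factorial * (2 + y) ^ k :=
      le_mul_of_one_le_left (by positivity) (by exact_mod_cast (k + 1).factorial_pos)

lemma two_pow_mul_factorial_bound_step {y e I : ℝ} (hy : 0 ≤ y) (he : 0 ≤ e) (k : ℕ)
    (hI : 2 ^ (k + 1) * k.factorial * (1 - (1 + y / 2) ^ k * e) ≤ I) :
    2 ^ (k + 2) * (k + 1).factorial * (1 - (1 + y / 2) ^ (k + 1) * e) ≤
      -2 * y ^ (k + 1) * e + 2 * (k + 1) * I := by
  have hhalf : (2 + y) ^ k = 2 ^ k * (1 + y / 2) ^ k := by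
    rw [← mul_pow]; ring
  calc 2 ^ (k + 2) * (k + 1).factorial * (1 - (1 + y / 2) ^ (k + 1) * e)
      = 2 * (k + 1) * (2 ^ (k + 1) * k.factorial * (1 - (1 + y / 2) ^ k * e)) -
          2 * ((k + 1).factorial * (2 + y) ^ k) * y * e := by
        push_cast [Nat.factorial_succ, hhalf]
        ring
    _ ≤ 2 * (k + 1) * I - 2 * y ^ k * y * e := by
        gcongr
        exact pow_le_factorial_succ_mul_add_two_pow hy k
    _ = -2 * y ^ (k + 1) * e + 2 * (k + 1) * I := by ring

theorem stmt_2 (y : ℝ) (hy : 0 < y) (k : ℕ) :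
    (∫ z in (0:ℝ)..y, z ^ k * Real.exp (-z / 2)) ≥
      2 ^ (k + 1) * (Nat.factorial k) * (1 - (1 + y / 2) ^ k * Real.exp (-y / 2)) := by
  induction k with
  | zero => norm_num [integral_exp_neg_half, mul_sub]
  | succ k ih =>
    rw [integral_pow_succ_mul_exp_neg_half]
    simpa using two_pow_mul_factorial_bound_step hy.le (exp_pos (-y / 2)).le k ih
end

section
/- Let $a, b > 0$, $T > 0$, and let $g, r : [0,T] \to \mathbb{R}$ with $g$ differentiable, $g \ge 0$, $g(0) = 0$, and $g'(t) \le a\,g(t) + b\,g(t)^2 + r(t)$ for all $t \in [0,T]$. Fix $t \in [0,T]$ and set $\varrho(t) := \int_0^t e^{-a s} r(s)\,ds$, assuming $\varrho(s) \le \varrho(t)$ for all $s \le t$ and $\varrho(t) > 0$. If $a - b\,\varrho(t)(e^{at} - 1) > 0$, then $g(t) \le \dfrac{a\, e^{at}\, \varrho(t)}{a - b\,\varrho(t)(e^{at}-1)}$. -/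
open MeasureTheory Set Real Topology

/-!
With `G s = e^{-as} g s` the hypothesis reads `G' ≤ b e^{as} G² + e^{-as} r`. Since `ϱ s ≤ ϱ t`,
the function `G s + (ϱ t - ϱ s)` (equal to `ϱ t` at `0`) stays strictly below the solution `v_A`
of `v' = b e^{as} v²`, `v 0 = A`, for every `A > ϱ t` for which `v_A` lives on `[0, t]`: up to
a first crossing we have `G ≤ v_A`, so `(G - v_A)' ≤ e^{-as} r`, and integrating this contradicts
the initial gap. Only this integrated form is used, as `ϱ` need not be differentiable. At `s = t`
this gives `g t < e^{at} v_A t`, and letting `A ↓ ϱ t` gives the bound.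
-/

theorem exists_first_nonpos_of_continuousOn {f : ℝ → ℝ} {a b : ℝ}
    (hf : ContinuousOn f (Icc a b)) (ha : 0 < f a) (hs : ∃ s ∈ Icc a b, f s ≤ 0) :
    ∃ c ∈ Ioc a b, f c ≤ 0 ∧ ∀ x ∈ Ico a c, 0 < f x := by
  set S := Icc a b ∩ f ⁻¹' Iic 0
  have hS : IsClosed S := hf.preimage_isClosed_of_isClosed isClosed_Icc isClosed_Iic
  have hS_bdd : BddBelow S := ⟨a, fun x hx => hx.1.1⟩
  obtain ⟨⟨hac, hcb⟩, hfc⟩ : sInf S ∈ S := hS.csInf_mem hs hS_bdd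
  refine ⟨sInf S, ⟨hac.lt_of_ne ?_, hcb⟩, hfc, fun x hx => ?_⟩
  · intro h
    exact (h ▸ hfc).not_gt ha
  · by_contra! hfx
    exact hx.2.not_ge (csInf_le hS_bdd ⟨⟨hx.1, hx.2.le.trans hcb⟩, hfx⟩)

theorem riccati_comparison {t : ℝ} {G G' v k φ ϱ : ℝ → ℝ}
    (hG : ∀ s ∈ Icc 0 t, HasDerivAt G (G' s) s)
    (hv : ∀ s ∈ Icc 0 t, HasDerivAt v (k s * v s ^ 2) s)
    (hφ : IntegrableOn φ (Icc 0 t))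
    (hϱ : ∀ s, ϱ s = ∫ u in (0 : ℝ)..s, φ u)
    (hG_nonneg : ∀ s ∈ Icc 0 t, 0 ≤ G s)
    (hk : ∀ s ∈ Icc 0 t, 0 ≤ k s)
    (hG' : ∀ s ∈ Icc 0 t, G' s ≤ k s * G s ^ 2 + φ s)
    (hmono : ∀ s ∈ Icc 0 t, ϱ s ≤ ϱ t)
    (h0 : G 0 + ϱ t < v 0) :
    ∀ s ∈ Icc 0 t, G s + (ϱ t - ϱ s) < v s := by
  by_contra! hcross
  obtain ⟨s, hs, hs_le⟩ := hcross
  have ht : 0 ≤ t := hs.1.trans hs.2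
  have hϱ_cont : ContinuousOn ϱ (Icc 0 t) := by
    have := intervalIntegral.continuousOn_primitive_interval (μ := volume) (a := 0) (b := t)
      (by rwa [uIcc_of_le ht])
    rw [uIcc_of_le ht] at this
    exact this.congr fun s _ => hϱ s
  have hG_cont : ContinuousOn G (Icc 0 t) := fun s hs => (hG s hs).continuousAt.continuousWithinAt
  have hv_cont : ContinuousOn v (Icc 0 t) := fun s hs => (hv s hs).continuousAt.continuousWithinAt
  obtain ⟨c, hc, hc_le, hc_lt⟩ := exists_first_nonpos_of_continuousOn
    (f := fun s => v s - (G s + (ϱ t - ϱ s)))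
    (hv_cont.sub (hG_cont.add (continuousOn_const.sub hϱ_cont)))
    (by simpa [hϱ 0] using h0) ⟨s, hs, by simpa using hs_le⟩
  have hsub : Icc 0 c ⊆ Icc 0 t := Icc_subset_Icc le_rfl hc.2
  have hFTC : (G c - v c) - (G 0 - v 0) ≤ ϱ c := by
    rw [hϱ c]
    refine intervalIntegral.sub_le_integral_of_hasDeriv_right_of_le hc.1.le
      ((hG_cont.sub hv_cont).mono hsub)
      (fun x hx => ((hG x (hsub (Ioo_subset_Icc_self hx))).sub
        (hv x (hsub (Ioo_subset_Icc_self hx)))).hasDerivWithinAt)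
      (hφ.mono_set hsub) fun x hx => ?_
    have hGv : G x ≤ v x := by
      have := hc_lt x ⟨hx.1.le, hx.2⟩
      linarith [hmono x (hsub (Ioo_subset_Icc_self hx))]
    replace hx : x ∈ Icc 0 t := hsub (Ioo_subset_Icc_self hx)
    have := mul_le_mul_of_nonneg_left (pow_le_pow_left₀ (hG_nonneg x hx) hGv 2) (hk x hx)
    linarith [hG' x hx]
  linarith

noncomputable def riccatiBarrier (a b A s : ℝ) : ℝ := a * A / (a - b * A * (exp (a * s) - 1))

theorem riccatiBarrier_zero {a : ℝ} (ha : a ≠ 0) (b A : ℝ) : riccatiBarrier a b A 0 = A := by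
  simp [riccatiBarrier, ha]

theorem hasDerivAt_riccatiBarrier {a b A s : ℝ} (hs : a - b * A * (exp (a * s) - 1) ≠ 0) :
    HasDerivAt (riccatiBarrier a b A) (b * exp (a * s) * riccatiBarrier a b A s ^ 2) s := by
  have hD : HasDerivAt (fun s => a - b * A * (exp (a * s) - 1)) (-(b * A * (exp (a * s) * a))) s :=
    ((((hasDerivAt_id s).const_mul a).exp.sub_const 1).const_mul (b * A)).const_sub a
      |>.congr_deriv (by simp)
  refine ((hasDerivAt_const s (a * A)).div hD hs).congr_deriv ?_
  simp only [riccatiBarrier]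
  field_simp
  ring

theorem hasDerivAt_exp_neg_mul_mul {g : ℝ → ℝ} {g' a s : ℝ} (hg : HasDerivAt g g' s) :
    HasDerivAt (fun s => exp (-a * s) * g s) (exp (-a * s) * (g' - a * g s)) s :=
  (((hasDerivAt_id s).const_mul (-a)).exp.mul hg).congr_deriv (by simp; ring)

theorem exp_neg_mul_mul_sub_le {a b s x x' y : ℝ} (h : x' ≤ a * x + b * x ^ 2 + y) :
    exp (-a * s) * (x' - a * x) ≤ b * exp (a * s) * (exp (-a * s) * x) ^ 2 + exp (-a * s) * y := by
  have hexp : exp (a * s) * exp (-a * s) = 1 := by rw [← exp_add]; simp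
  calc exp (-a * s) * (x' - a * x) ≤ exp (-a * s) * (b * x ^ 2 + y) := by
        gcongr; linarith
    _ = b * exp (a * s) * (exp (-a * s) * x) ^ 2 + exp (-a * s) * y := by
        linear_combination (-(b * x ^ 2 * exp (-a * s))) * hexp

theorem le_exp_mul_riccatiBarrier {a b t A : ℝ} {g g' r ϱ : ℝ → ℝ} (ha : 0 < a) (hb : 0 ≤ b)
    (ht : 0 ≤ t) (hg' : ∀ s ∈ Icc 0 t, HasDerivAt g (g' s) s)
    (hg_nonneg : ∀ s ∈ Icc 0 t, 0 ≤ g s) (hg0 : g 0 = 0)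
    (hineq : ∀ s ∈ Icc 0 t, g' s ≤ a * g s + b * g s ^ 2 + r s) (hr : IntegrableOn r (Icc 0 t))
    (hϱ : ∀ s, ϱ s = ∫ u in (0 : ℝ)..s, exp (-a * u) * r u)
    (hmono : ∀ s ∈ Icc 0 t, ϱ s ≤ ϱ t) (hA : ϱ t < A) (hD : 0 < a - b * A * (exp (a * t) - 1)) :
    g t ≤ exp (a * t) * riccatiBarrier a b A t := by
  have hA_nonneg : 0 ≤ A := by
    have := hmono 0 ⟨le_rfl, ht⟩
    rw [hϱ 0, intervalIntegral.integral_same] at this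
    linarith
  have hD_pos : ∀ s ∈ Icc 0 t, 0 < a - b * A * (exp (a * s) - 1) := fun s hs => by
    have : exp (a * s) ≤ exp (a * t) := exp_le_exp.mpr (mul_le_mul_of_nonneg_left hs.2 ha.le)
    calc 0 < a - b * A * (exp (a * t) - 1) := hD
      _ ≤ a - b * A * (exp (a * s) - 1) := by gcongr
  have hcomp := riccati_comparison (G := fun s => exp (-a * s) * g s)
    (k := fun s => b * exp (a * s))
    (fun s hs => hasDerivAt_exp_neg_mul_mul (hg' s hs))
    (fun s hs => hasDerivAt_riccatiBarrier (hD_pos s hs).ne')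
    (hr.continuousOn_mul (by fun_prop) isCompact_Icc) hϱ
    (fun s hs => mul_nonneg (exp_nonneg _) (hg_nonneg s hs))
    (fun s _ => by positivity)
    (fun s hs => exp_neg_mul_mul_sub_le (hineq s hs)) hmono
    (by simpa [riccatiBarrier_zero ha.ne', hg0]) t ⟨ht, le_rfl⟩
  have hgt : g t = exp (a * t) * (exp (-a * t) * g t) := by
    rw [← mul_assoc, ← exp_add]; simp
  rw [hgt]
  gcongr
  simpa using hcomp.le

theorem stmt_10_general (a b T : ℝ) (ha : 0 < a) (hb : 0 < b)
    (g g' r : ℝ → ℝ)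
    (hg' : ∀ s ∈ Set.Icc (0 : ℝ) T, HasDerivAt g (g' s) s)
    (hgpos : ∀ s ∈ Set.Icc (0 : ℝ) T, 0 ≤ g s)
    (hg0 : g 0 = 0)
    (hineq : ∀ s ∈ Set.Icc (0 : ℝ) T, g' s ≤ a * g s + b * (g s) ^ 2 + r s)
    (hr : IntervalIntegrable r volume 0 T)
    (t : ℝ) (ht : t ∈ Set.Icc (0 : ℝ) T)
    (ϱ : ℝ → ℝ) (hϱ : ∀ s, ϱ s = ∫ u in (0:ℝ)..s, Real.exp (-a * u) * r u)
    (hmono : ∀ s ∈ Set.Icc (0 : ℝ) t, ϱ s ≤ ϱ t)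
    (hcond : 0 < a - b * ϱ t * (Real.exp (a * t) - 1)) :
    g t ≤ a * Real.exp (a * t) * ϱ t / (a - b * ϱ t * (Real.exp (a * t) - 1)) := by
  have hsub : Icc 0 t ⊆ Icc 0 T := Icc_subset_Icc le_rfl ht.2
  have hr_t : IntegrableOn r (Icc 0 t) :=
    ((intervalIntegrable_iff_integrableOn_Icc_of_le (ht.1.trans ht.2)).mp hr).mono_set hsub
  have hF : ContinuousAt (fun A => exp (a * t) * riccatiBarrier a b A t) (ϱ t) := by
    unfold riccatiBarrier; fun_prop (disch := exact hcond.ne')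
  have hD : ∀ᶠ A in 𝓝 (ϱ t), 0 < a - b * A * (exp (a * t) - 1) :=
    continuousAt_const.eventually_lt (by fun_prop) hcond
  have hrw : a * exp (a * t) * ϱ t / (a - b * ϱ t * (exp (a * t) - 1))
      = exp (a * t) * riccatiBarrier a b (ϱ t) t := by
    unfold riccatiBarrier; ring
  rw [hrw]
  refine ge_of_tendsto (hF.tendsto.mono_left (nhdsWithin_le_nhds (s := Ioi (ϱ t)))) ?_
  filter_upwards [self_mem_nhdsWithin, nhdsWithin_le_nhds hD] with A hA hDA
  exact le_exp_mul_riccatiBarrier ha hb.le ht.1 (fun s hs => hg' s (hsub hs))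
    (fun s hs => hgpos s (hsub hs)) hg0 (fun s hs => hineq s (hsub hs)) hr_t hϱ hmono hA hDA

theorem stmt_10 (a b T : ℝ) (ha : 0 < a) (hb : 0 < b) (hT : 0 < T)
    (g g' r : ℝ → ℝ)
    (hg' : ∀ s ∈ Set.Icc (0 : ℝ) T, HasDerivAt g (g' s) s)
    (hgpos : ∀ s ∈ Set.Icc (0 : ℝ) T, 0 ≤ g s)
    (hg0 : g 0 = 0)
    (hineq : ∀ s ∈ Set.Icc (0 : ℝ) T, g' s ≤ a * g s + b * (g s) ^ 2 + r s)
    (hr : IntervalIntegrable r volume 0 T)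
    (t : ℝ) (ht : t ∈ Set.Icc (0 : ℝ) T)
    (ϱ : ℝ → ℝ) (hϱ : ∀ s, ϱ s = ∫ u in (0:ℝ)..s, Real.exp (-a * u) * r u)
    (hmono : ∀ s ∈ Set.Icc (0 : ℝ) t, ϱ s ≤ ϱ t)
    (hϱpos : 0 < ϱ t)
    (hcond : 0 < a - b * ϱ t * (Real.exp (a * t) - 1)) :
    g t ≤ a * Real.exp (a * t) * ϱ t / (a - b * ϱ t * (Real.exp (a * t) - 1)) :=
  stmt_10_general a b T ha hb g g' r hg' hgpos hg0 hineq hr t ht ϱ hϱ hmono hcond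
end
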